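/- arXiv:2103.06696 — 5 statements merged into one kernel-verified Lean document; each statement's English description precedes it below -/
import Mathlib

section
/- For every even integer n ≥ 8 there exists a 1.5D terrain T with n vertices such that the prickliness π(T) is at most 2, and there exists a viewpoint v on the surface of T such that the set of points of the surface visible from v has at least n/2 − 1 connected components. -/
noncomputable section

/-- The standard inner product on `ℝ²` (viewed as `ℝ × ℝ`). -/
def dot2 (x y : ℝ × ℝ) : ℝ := x.1 * y.1 + x.2 * y.2

/-- The surface of the 1.5D terrain with vertices `P 0, …, P (n-1)`: the union of the
segments joining consecutive vertices. -/
def surf15 {n : ℕ} (P : Fin n → ℝ × ℝ) : Set (ℝ × ℝ) :=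
  ⋃ i : Fin n, ⋃ h : (i : ℕ) + 1 < n, segment ℝ (P i) (P ⟨(i : ℕ) + 1, h⟩)

/-- The vertex `P i` is internal and convex: `0 < i < n - 1` and `P i` lies strictly above
the line through its two neighbors. -/
def ConvexAt15 {n : ℕ} (P : Fin n → ℝ × ℝ) (i : Fin n) : Prop :=
  ∃ (h1 : 1 ≤ (i : ℕ)) (h2 : (i : ℕ) + 1 < n),
    ((P ⟨(i : ℕ) + 1, h2⟩).1 - (P ⟨(i : ℕ) - 1, by have := i.isLt; omega⟩).1) *
        ((P i).2 - (P ⟨(i : ℕ) - 1, by have := i.isLt; omega⟩).2)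
      > ((P i).1 - (P ⟨(i : ℕ) - 1, by have := i.isLt; omega⟩).1) *
        ((P ⟨(i : ℕ) + 1, h2⟩).2 - (P ⟨(i : ℕ) - 1, by have := i.isLt; omega⟩).2)

/-- The internal vertex `P i` is a local maximum in direction `w`. -/
def LocMaxAt15 {n : ℕ} (P : Fin n → ℝ × ℝ) (w : ℝ × ℝ) (i : Fin n) : Prop :=
  ∃ (h1 : 1 ≤ (i : ℕ)) (h2 : (i : ℕ) + 1 < n),
    dot2 (P ⟨(i : ℕ) - 1, by have := i.isLt; omega⟩ - P i) w ≤ 0 ∧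
    dot2 (P ⟨(i : ℕ) + 1, h2⟩ - P i) w ≤ 0

/-- The number of internal convex vertices that are local maxima in direction `w`. -/
def count15 {n : ℕ} (P : Fin n → ℝ × ℝ) (w : ℝ × ℝ) : ℕ :=
  {i : Fin n | ConvexAt15 P i ∧ LocMaxAt15 P w i}.ncard

/-- The prickliness of the 1.5D terrain: the maximum of `count15` over nonzero directions. -/
def prick15 {n : ℕ} (P : Fin n → ℝ × ℝ) : ℕ :=
  sSup {k : ℕ | ∃ w : ℝ × ℝ, w ≠ 0 ∧ k = count15 P w}

/-- `q` is visible from `v`: no point of the segment `[v,q]` lies strictly below the surface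
(the surface being the graph of a function, a point `r` is on or above it iff every surface
point with the same `x`-coordinate is at height at most `r.2`). -/
def Visible15 {n : ℕ} (P : Fin n → ℝ × ℝ) (v q : ℝ × ℝ) : Prop :=
  ∀ r ∈ segment ℝ v q, ∀ s ∈ surf15 P, s.1 = r.1 → s.2 ≤ r.2

/-- The viewshed of `v`: all points of the surface visible from `v`. -/
def visSet15 {n : ℕ} (P : Fin n → ℝ × ℝ) (v : ℝ × ℝ) : Set (ℝ × ℝ) :=
  {q ∈ surf15 P | Visible15 P v q}

namespace Prick15Aux

/-- The vertices of our terrain: `PP 0 = (0,0)`, the `k`-th peak is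
`PP (2k) = (8^k, -2^k)`, and the `k+1`-st notch is `PP (2k+1) = ((5/4)·8^k, -(3/2)·2^k)`. -/
def PP (j : ℕ) : ℝ × ℝ :=
  if j = 0 then (0, 0)
  else if j % 2 = 0 then ((8:ℝ) ^ (j / 2), -(2:ℝ) ^ (j / 2))
  else ((5 / 4) * (8:ℝ) ^ (j / 2), -((3 / 2) * (2:ℝ) ^ (j / 2)))

lemma PP_zero : PP 0 = (0, 0) := rfl

lemma PP_even {k : ℕ} (hk : 1 ≤ k) : PP (2 * k) = ((8:ℝ) ^ k, -(2:ℝ) ^ k) := by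
  have h0 : ¬ (2 * k = 0) := by omega
  have h2 : (2 * k) % 2 = 0 := by omega
  have h3 : (2 * k) / 2 = k := by omega
  simp only [PP, h0, if_false, h2, if_true, h3]

lemma PP_odd (k : ℕ) : PP (2 * k + 1) = ((5 / 4) * (8:ℝ) ^ k, -((3 / 2) * (2:ℝ) ^ k)) := by
  have h0 : ¬ (2 * k + 1 = 0) := by omega
  have h2 : ¬ ((2 * k + 1) % 2 = 0) := by omega
  have h3 : (2 * k + 1) / 2 = k := by omega
  simp only [PP, h0, if_false, h2, h3]

lemma PP_fst_nonneg (j : ℕ) : 0 ≤ (PP j).1 := by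
  rcases Nat.eq_zero_or_pos j with h | h
  · subst h; simp [PP_zero]
  · rcases Nat.even_or_odd j with ⟨l, hl⟩ | ⟨l, hl⟩
    · have hl' : j = 2 * l := by omega
      have hl1 : 1 ≤ l := by omega
      rw [hl', PP_even hl1]
      positivity
    · rw [hl, PP_odd]
      positivity

lemma PP_fst_strictMono : StrictMono fun j => (PP j).1 := by
  apply strictMono_nat_of_lt_succ
  intro j
  rcases Nat.even_or_odd j with ⟨l, hl⟩ | ⟨l, hl⟩
  · have hl' : j = 2 * l := by omega
    subst hl'
    rcases Nat.eq_zero_or_pos l with h0 | h0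
    · subst h0
      have : PP (2 * 0 + 1) = ((5/4 : ℝ), -((3/2 : ℝ))) := by
        rw [PP_odd]; norm_num
      simp only [Nat.mul_zero, PP_zero, this]
      norm_num
    · rw [PP_even h0, PP_odd]
      have := pow_pos (by norm_num : (0:ℝ) < 8) l
      dsimp only
      nlinarith
  · subst hl
    have : 2 * l + 1 + 1 = 2 * (l + 1) := by ring
    rw [this, PP_odd, PP_even (by omega)]
    have := pow_pos (by norm_num : (0:ℝ) < 8) l
    have h8 : (8:ℝ) ^ (l + 1) = 8 * 8 ^ l := by ring
    dsimp only
    rw [h8]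
    nlinarith

lemma PP_fst_lt {i j : ℕ} (h : i < j) : (PP i).1 < (PP j).1 := PP_fst_strictMono h

lemma PP_fst_le {i j : ℕ} (h : i ≤ j) : (PP i).1 ≤ (PP j).1 := PP_fst_strictMono.monotone h

/-- Extract coordinates from segment membership. -/
lemma seg_coord {p q s : ℝ × ℝ} (h : s ∈ segment ℝ p q) :
    ∃ a b : ℝ, 0 ≤ a ∧ 0 ≤ b ∧ a + b = 1 ∧
      s.1 = a * p.1 + b * q.1 ∧ s.2 = a * p.2 + b * q.2 := by
  obtain ⟨a, b, ha, hb, hab, rfl⟩ := h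
  exact ⟨a, b, ha, hb, hab, by simp, by simp⟩

/-- A segment lies (weakly) below any line below which both its endpoints lie. -/
lemma seg_line {p q s : ℝ × ℝ} (h : s ∈ segment ℝ p q) (α β γ : ℝ)
    (hp : α * p.1 + β * p.2 ≤ γ) (hq : α * q.1 + β * q.2 ≤ γ) :
    α * s.1 + β * s.2 ≤ γ := by
  obtain ⟨a, b, ha, hb, hab, h1, h2⟩ := seg_coord h
  calc α * s.1 + β * s.2
      = a * (α * p.1 + β * p.2) + b * (α * q.1 + β * q.2) := by rw [h1, h2]; ring
    _ ≤ a * γ + b * γ :=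
        add_le_add (mul_le_mul_of_nonneg_left hp ha) (mul_le_mul_of_nonneg_left hq hb)
    _ = γ := by rw [← add_mul, hab, one_mul]

/-- The `x`-coordinate of a point of a segment is between those of the endpoints. -/
lemma seg_fst_bounds {p q s : ℝ × ℝ} (h : s ∈ segment ℝ p q) (hpq : p.1 ≤ q.1) :
    p.1 ≤ s.1 ∧ s.1 ≤ q.1 := by
  obtain ⟨a, b, ha, hb, hab, h1, h2⟩ := seg_coord h
  have ea : a = 1 - b := by linarith
  subst ea
  constructor
  · nlinarith [mul_nonneg hb (sub_nonneg.2 hpq)]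
  · nlinarith [mul_nonneg ha (sub_nonneg.2 hpq)]

lemma mem_surf_iff {n : ℕ} {s : ℝ × ℝ} :
    s ∈ surf15 (fun i : Fin n => PP i.val) ↔
      ∃ i : ℕ, i + 1 < n ∧ s ∈ segment ℝ (PP i) (PP (i + 1)) := by
  simp only [surf15, Set.mem_iUnion]
  constructor
  · rintro ⟨i, h, hs⟩; exact ⟨i.val, h, hs⟩
  · rintro ⟨i, h, hs⟩; exact ⟨⟨i, by omega⟩, h, hs⟩

lemma vertex_mem_surf {n j : ℕ} (h : j + 1 < n) :
    PP j ∈ surf15 (fun i : Fin n => PP i.val) :=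
  mem_surf_iff.2 ⟨j, h, left_mem_segment ℝ _ _⟩

lemma surf_fst_nonneg {n : ℕ} {s : ℝ × ℝ}
    (hs : s ∈ surf15 (fun i : Fin n => PP i.val)) : 0 ≤ s.1 := by
  obtain ⟨i, hi, hseg⟩ := mem_surf_iff.1 hs
  obtain ⟨a, b, ha, hb, hab, h1, _⟩ := seg_coord hseg
  have := PP_fst_nonneg i
  have := PP_fst_nonneg (i + 1)
  nlinarith

lemma surf_fst_le {n : ℕ} {s : ℝ × ℝ}
    (hs : s ∈ surf15 (fun i : Fin n => PP i.val)) : s.1 ≤ (PP (n - 1)).1 := by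
  obtain ⟨i, hi, hseg⟩ := mem_surf_iff.1 hs
  have h3 : (PP i).1 ≤ (PP (i + 1)).1 := PP_fst_le (by omega)
  have h2 : (PP (i + 1)).1 ≤ (PP (n - 1)).1 := PP_fst_le (by omega)
  have := (seg_fst_bounds hseg h3).2
  linarith

/-- A surface point whose `x`-coordinate equals that of a vertex is that vertex. -/
lemma surf_eq_vertex {n j : ℕ} {s : ℝ × ℝ} (hj : j < n)
    (hs : s ∈ surf15 (fun i : Fin n => PP i.val)) (hx : s.1 = (PP j).1) : s = PP j := by
  obtain ⟨i, hi, hseg⟩ := mem_surf_iff.1 hs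
  obtain ⟨a, b, ha, hb, hab, h1, h2⟩ := seg_coord hseg
  have ea : a = 1 - b := by linarith
  subst ea
  have hlt : (PP i).1 < (PP (i + 1)).1 := PP_fst_lt (by omega)
  obtain ⟨hlow, hhigh⟩ := seg_fst_bounds hseg (le_of_lt hlt)
  rcases lt_trichotomy j i with hji | hji | hji
  · exact absurd (hx ▸ hlow) (not_le.2 (PP_fst_lt hji))
  · subst hji
    have hb0 : b = 0 := by
      by_contra hbne
      have hbpos : 0 < b := lt_of_le_of_ne hb (Ne.symm hbne)
      nlinarith [mul_pos hbpos (sub_pos.2 hlt)]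
    apply Prod.ext
    · exact hx
    · rw [h2, hb0]; ring
  · rcases lt_trichotomy j (i + 1) with hji2 | hji2 | hji2
    · omega
    · subst hji2
      have hb1 : b = 1 := by
        by_contra hbne
        have hblt : b < 1 := lt_of_le_of_ne (by linarith) hbne
        nlinarith [mul_pos (by linarith : (0:ℝ) < 1 - b) (sub_pos.2 hlt)]
      apply Prod.ext
      · exact hx
      · rw [h2, hb1]; ring
    · exact absurd (hx ▸ hhigh) (not_le.2 (PP_fst_lt hji2))


/-- All vertices up to index `2k+1` lie on or below the line `x + 4^k y = 0`
(the line of sight from the viewpoint to the `k`-th peak). -/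
lemma F_vertex (k : ℕ) {j : ℕ} (hj : j ≤ 2 * k + 1) :
    (PP j).1 + 4 ^ k * (PP j).2 ≤ 0 := by
  rcases Nat.eq_zero_or_pos j with h0 | h0
  · subst h0; simp [PP_zero]
  · rcases Nat.even_or_odd j with ⟨l, hl⟩ | ⟨l, hl⟩
    · have hl' : j = 2 * l := by omega
      have hl1 : 1 ≤ l := by omega
      have hlk : l ≤ k := by omega
      rw [hl', PP_even hl1]
      have h4 : (4:ℝ) ^ l ≤ 4 ^ k := pow_le_pow_right₀ (by norm_num) hlk
      have h8 : (8:ℝ) ^ l = 4 ^ l * 2 ^ l := by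
        rw [← mul_pow]; norm_num
      have h2 : (0:ℝ) < 2 ^ l := pow_pos (by norm_num) l
      dsimp only
      rw [h8]
      nlinarith [mul_nonneg (sub_nonneg.2 h4) (le_of_lt h2)]
    · have hlk : l ≤ k := by omega
      rw [hl, PP_odd]
      have h4 : (4:ℝ) ^ l ≤ 4 ^ k := pow_le_pow_right₀ (by norm_num) hlk
      have h8 : (8:ℝ) ^ l = 4 ^ l * 2 ^ l := by
        rw [← mul_pow]; norm_num
      have h2 : (0:ℝ) < 2 ^ l := pow_pos (by norm_num) l
      have h4l : (0:ℝ) < 4 ^ l := pow_pos (by norm_num) l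
      dsimp only
      rw [h8]
      nlinarith [mul_nonneg (sub_nonneg.2 h4) (le_of_lt h2)]

/-- Every peak is visible from the viewpoint `(0,0)`. -/
lemma tip_visible {n k : ℕ} (hk : 1 ≤ k) (hkn : 2 * k + 1 < n) :
    Visible15 (fun i : Fin n => PP i.val) (0, 0) (PP (2 * k)) := by
  intro r hr s hs hxs
  rw [PP_even hk] at hr
  obtain ⟨a, b, ha, hb, hab, hr1, hr2⟩ := seg_coord hr
  simp only at hr1 hr2
  have hr1' : r.1 = b * 8 ^ k := by rw [hr1]; ring
  have hr2' : r.2 = -(b * 2 ^ k) := by rw [hr2]; ring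
  obtain ⟨i, hi, hseg⟩ := mem_surf_iff.1 hs
  by_cases hc : i ≤ 2 * k
  · -- the whole edge lies below the sight line
    have hF : 1 * s.1 + 4 ^ k * s.2 ≤ 0 := by
      apply seg_line hseg 1 (4 ^ k) 0
      · have := F_vertex k (j := i) (by omega); linarith
      · have := F_vertex k (j := i + 1) (by omega); linarith
    have h8 : (8:ℝ) ^ k = 4 ^ k * 2 ^ k := by rw [← mul_pow]; norm_num
    have h4 : (0:ℝ) < 4 ^ k := pow_pos (by norm_num) k
    rw [hr2']
    have hs1 : s.1 = b * 8 ^ k := by rw [hxs, hr1']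
    rw [hs1, h8] at hF
    nlinarith
  · -- the edge lies strictly to the right of the peak: impossible
    exfalso
    have hmono : (PP i).1 ≤ (PP (i + 1)).1 := PP_fst_le (by omega)
    have hlow : (PP i).1 ≤ s.1 := (seg_fst_bounds hseg hmono).1
    have hge : (PP (2 * k + 1)).1 ≤ (PP i).1 := PP_fst_le (by omega)
    rw [PP_odd] at hge
    simp only at hge
    have h8 : (0:ℝ) < 8 ^ k := pow_pos (by norm_num) k
    have hb1 : b ≤ 1 := by linarith
    have : s.1 ≤ 8 ^ k := by rw [hxs, hr1']; nlinarith
    nlinarith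

/-- Every notch (except the first) is invisible from the viewpoint: it is blocked by the
preceding peak. -/
lemma valley_invisible {n j : ℕ} (h1 : 1 ≤ j) (hjn : 2 * j + 1 < n) {q : ℝ × ℝ}
    (hq : q ∈ surf15 (fun i : Fin n => PP i.val))
    (hx : q.1 = (5 / 4) * 8 ^ j) :
    ¬ Visible15 (fun i : Fin n => PP i.val) (0, 0) q := by
  intro hvis
  have hxq : q.1 = (PP (2 * j + 1)).1 := by rw [PP_odd]; exact hx
  have hid : q = PP (2 * j + 1) := surf_eq_vertex (by omega) hq hxq
  have hr : ((4 / 5 : ℝ)) • q ∈ segment ℝ ((0, 0) : ℝ × ℝ) q := by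
    refine ⟨1 / 5, 4 / 5, by norm_num, by norm_num, by norm_num, ?_⟩
    have : ((0,0) : ℝ × ℝ) = (0 : ℝ × ℝ) := rfl
    rw [this, smul_zero, zero_add]
  have htip : PP (2 * j) ∈ surf15 (fun i : Fin n => PP i.val) := vertex_mem_surf (by omega)
  have hfst : (PP (2 * j)).1 = (((4 / 5 : ℝ)) • q).1 := by
    rw [PP_even h1, hid, PP_odd]
    simp [Prod.smul_fst]
    ring
  have hle := hvis _ hr _ htip hfst
  rw [PP_even h1, hid, PP_odd] at hle
  simp only [Prod.smul_snd, smul_eq_mul] at hle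
  have h2 : (0:ℝ) < 2 ^ j := pow_pos (by norm_num) j
  nlinarith

/-- For any nonzero direction, at most two vertices are convex local maxima. -/
lemma count_le {n m : ℕ} (hn : n = 2 * m + 2) {w : ℝ × ℝ} (hw : w ≠ 0) :
    count15 (fun i : Fin n => PP i.val) w ≤ 2 := by
  subst hn
  set Pf : Fin (2 * m + 2) → ℝ × ℝ := fun i => PP i.val with hPf
  set s : Set (Fin (2 * m + 2)) := {i | ConvexAt15 Pf i ∧ LocMaxAt15 Pf w i} with hsdef
  show s.ncard ≤ 2
  -- every element of `s` is a peak whose "cone" contains `w`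
  have key : ∀ i ∈ s, ∃ k : ℕ, 1 ≤ k ∧ (i : ℕ) = 2 * k ∧
      (4:ℝ) ^ k * w.1 ≤ 2 * w.2 ∧ 2 * w.2 ≤ 27 * 4 ^ (k - 1) * w.1 := by
    rintro i ⟨hconv, hloc⟩
    obtain ⟨h1, h2, hd1, hd2⟩ := hloc
    rcases Nat.even_or_odd (i : ℕ) with ⟨k, hk⟩ | ⟨l, hl⟩
    · -- a peak
      have hik : (i : ℕ) = 2 * k := by omega
      have hk1 : 1 ≤ k := by omega
      refine ⟨k, hk1, hik, ?_, ?_⟩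
      · -- from the right neighbor
        have hd2' : dot2 (PP ((i : ℕ) + 1) - PP (i : ℕ)) w ≤ 0 := hd2
        rw [hik] at hd2'
        rw [PP_odd, PP_even hk1] at hd2'
        unfold dot2 at hd2'
        simp only [Prod.fst_sub, Prod.snd_sub] at hd2'
        have h8 : (8:ℝ) ^ k = 4 ^ k * 2 ^ k := by rw [← mul_pow]; norm_num
        have h2p : (0:ℝ) < 2 ^ k := pow_pos (by norm_num) k
        rw [h8] at hd2'
        nlinarith
      · -- from the left neighbor
        have hd1' : dot2 (PP ((i : ℕ) - 1) - PP (i : ℕ)) w ≤ 0 := hd1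
        have hi1 : (i : ℕ) - 1 = 2 * (k - 1) + 1 := by omega
        rw [hi1, hik] at hd1'
        rw [PP_odd, PP_even hk1] at hd1'
        unfold dot2 at hd1'
        simp only [Prod.fst_sub, Prod.snd_sub] at hd1'
        obtain ⟨k', rfl⟩ : ∃ k', k = k' + 1 := ⟨k - 1, by omega⟩
        simp only [Nat.add_sub_cancel] at hd1' ⊢
        have h8 : (8:ℝ) ^ k' = 4 ^ k' * 2 ^ k' := by
          rw [← mul_pow]; norm_num
        have h8' : (8:ℝ) ^ (k' + 1) = 8 * (4 ^ k' * 2 ^ k') := by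
          rw [pow_succ, h8]; ring
        have h2' : (2:ℝ) ^ (k' + 1) = 2 * 2 ^ k' := by rw [pow_succ]; ring
        have h2p : (0:ℝ) < 2 ^ k' := pow_pos (by norm_num) k'
        rw [h8, h8', h2'] at hd1'
        nlinarith
    · -- a notch: convexity fails
      exfalso
      obtain ⟨h1', h2', hineq⟩ := hconv
      have hineq' : ((PP ((i : ℕ) + 1)).1 - (PP ((i : ℕ) - 1)).1) *
            ((PP (i : ℕ)).2 - (PP ((i : ℕ) - 1)).2)
          > ((PP (i : ℕ)).1 - (PP ((i : ℕ) - 1)).1) *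
            ((PP ((i : ℕ) + 1)).2 - (PP ((i : ℕ) - 1)).2) := hineq
      clear hineq
      have hi1 : (i : ℕ) - 1 = 2 * l := by omega
      have hi2 : (i : ℕ) + 1 = 2 * (l + 1) := by omega
      rw [hi1, hi2, hl] at hineq'
      rename' hineq' => hineq
      rw [PP_odd, PP_even (by omega : 1 ≤ l + 1)] at hineq
      rcases Nat.eq_zero_or_pos l with hl0 | hl0
      · subst hl0
        rw [PP_zero] at hineq
        simp only at hineq
        norm_num at hineq
      · rw [PP_even hl0] at hineq
        simp only at hineq
        have h8 : (8:ℝ) ^ (l + 1) = 8 * 8 ^ l := by ring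
        have h2 : (2:ℝ) ^ (l + 1) = 2 * 2 ^ l := by ring
        rw [h8, h2] at hineq
        have h8p : (0:ℝ) < 8 ^ l := pow_pos (by norm_num) l
        have h2p : (0:ℝ) < 2 ^ l := pow_pos (by norm_num) l
        nlinarith
  -- the direction has positive first coordinate
  by_contra hcard
  push_neg at hcard
  rw [Set.two_lt_ncard (Set.toFinite s)] at hcard
  obtain ⟨a, has, b, hbs, c, hcs, hab, hac, hbc⟩ := hcard
  obtain ⟨ka, hka1, hka2, hka3, hka4⟩ := key a has
  obtain ⟨kb, hkb1, hkb2, hkb3, hkb4⟩ := key b hbs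
  obtain ⟨kc, hkc1, hkc2, hkc3, hkc4⟩ := key c hcs
  have hw1 : 0 < w.1 := by
    have h4 : (4:ℝ) ^ ka = 4 * 4 ^ (ka - 1) := by
      have hka : ka = (ka - 1) + 1 := by omega
      calc (4:ℝ) ^ ka = 4 ^ ((ka - 1) + 1) := by rw [← hka]
        _ = 4 * 4 ^ (ka - 1) := by rw [pow_succ]; ring
    have h4p : (0:ℝ) < 4 ^ (ka - 1) := pow_pos (by norm_num) (ka - 1)
    rw [h4] at hka3
    rcases lt_trichotomy w.1 0 with hneg | h0 | hpos
    · exfalso; nlinarith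
    · exfalso
      apply hw
      have hw2 : w.2 = 0 := le_antisymm (by nlinarith) (by nlinarith)
      exact Prod.ext h0 hw2
    · exact hpos
  have gap : ∀ k k' : ℕ, 1 ≤ k →
      ((4:ℝ) ^ k * w.1 ≤ 2 * w.2 ∧ 2 * w.2 ≤ 27 * 4 ^ (k - 1) * w.1) →
      ((4:ℝ) ^ k' * w.1 ≤ 2 * w.2 ∧ 2 * w.2 ≤ 27 * 4 ^ (k - 1) * w.1) →
      k + 2 ≤ k' → False := by
    intro k k' hk1 hcone hcone' hkk
    have h1 : (4:ℝ) ^ (k + 2) ≤ 4 ^ k' := pow_le_pow_right₀ (by norm_num) hkk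
    have h2 : (4:ℝ) ^ (k + 2) = 64 * 4 ^ (k - 1) := by
      have hk : k + 2 = (k - 1) + 3 := by omega
      calc (4:ℝ) ^ (k + 2) = 4 ^ ((k - 1) + 3) := by rw [← hk]
        _ = 4 ^ (k - 1) * 64 := by rw [pow_add]; norm_num
        _ = 64 * 4 ^ (k - 1) := by ring
    have h4p : (0:ℝ) < 4 ^ (k - 1) := pow_pos (by norm_num) (k - 1)
    nlinarith [hcone'.1, hcone.2]
  -- the three peak indices are distinct
  have hkab : ka ≠ kb := by
    intro h; apply hab; apply Fin.ext; omega
  have hkac : ka ≠ kc := by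
    intro h; apply hac; apply Fin.ext; omega
  have hkbc : kb ≠ kc := by
    intro h; apply hbc; apply Fin.ext; omega
  have g1 : ¬ (ka + 2 ≤ kb) := fun h => gap ka kb hka1 ⟨hka3, hka4⟩ ⟨hkb3, hka4⟩ h
  have g2 : ¬ (kb + 2 ≤ ka) := fun h => gap kb ka hkb1 ⟨hkb3, hkb4⟩ ⟨hka3, hkb4⟩ h
  have g3 : ¬ (ka + 2 ≤ kc) := fun h => gap ka kc hka1 ⟨hka3, hka4⟩ ⟨hkc3, hka4⟩ h
  have g4 : ¬ (kc + 2 ≤ ka) := fun h => gap kc ka hkc1 ⟨hkc3, hkc4⟩ ⟨hka3, hkc4⟩ h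
  have g5 : ¬ (kb + 2 ≤ kc) := fun h => gap kb kc hkb1 ⟨hkb3, hkb4⟩ ⟨hkc3, hkb4⟩ h
  have g6 : ¬ (kc + 2 ≤ kb) := fun h => gap kc kb hkc1 ⟨hkc3, hkc4⟩ ⟨hkb3, hkc4⟩ h
  omega

/-- Boundaries of the separating strips. -/
def A (k : ℕ) : ℝ := if k ≤ 1 then -1 else (5 / 4) * 8 ^ (k - 1)

/-- The separating open strips. -/
def U (k : ℕ) : Set (ℝ × ℝ) := {p | A k < p.1 ∧ p.1 < A (k + 1)}

lemma A_succ {j : ℕ} (hj : 1 ≤ j) : A (j + 1) = (5 / 4) * 8 ^ j := by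
  have : ¬ (j + 1 ≤ 1) := by omega
  simp only [A, this, if_false, Nat.add_sub_cancel]

lemma A_lt {k l : ℕ} (hk : 1 ≤ k) (hkl : k < l) : A k < A l := by
  have hl2 : ¬ (l ≤ 1) := by omega
  rcases Nat.lt_or_ge k 2 with hk2 | hk2
  · have hk1 : k ≤ 1 := by omega
    simp only [A, hk1, if_true, hl2, if_false]
    have : (0:ℝ) < 8 ^ (l - 1) := pow_pos (by norm_num) (l - 1)
    linarith
  · have hk1 : ¬ (k ≤ 1) := by omega
    simp only [A, hk1, if_false, hl2]
    have : (8:ℝ) ^ (k - 1) < 8 ^ (l - 1) := pow_lt_pow_right₀ (by norm_num) (by omega)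
    nlinarith

lemma A_le {k l : ℕ} (hk : 1 ≤ k) (hkl : k ≤ l) : A k ≤ A l := by
  rcases eq_or_lt_of_le hkl with rfl | h
  · exact le_refl _
  · exact le_of_lt (A_lt hk h)

lemma U_open (k : ℕ) : IsOpen (U k) := by
  have : U k = (fun p : ℝ × ℝ => p.1) ⁻¹' (Set.Ioo (A k) (A (k + 1))) := rfl
  rw [this]
  exact isOpen_Ioo.preimage continuous_fst

lemma tip_mem_U {k : ℕ} (hk : 1 ≤ k) : PP (2 * k) ∈ U k := by
  rw [PP_even hk]
  have h8 : (0:ℝ) < 8 ^ (k - 1) := pow_pos (by norm_num) (k - 1)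
  have hkk : (8:ℝ) ^ k = 8 * 8 ^ (k - 1) := by
    have hk' : k = (k - 1) + 1 := by omega
    calc (8:ℝ) ^ k = 8 ^ ((k - 1) + 1) := by rw [← hk']
      _ = 8 * 8 ^ (k - 1) := by rw [pow_succ]; ring
  constructor
  · show A k < (8:ℝ) ^ k
    rcases Nat.lt_or_ge k 2 with hk2 | hk2
    · have hk1 : k ≤ 1 := by omega
      simp only [A, hk1, if_true]
      have : (0:ℝ) < 8 ^ k := pow_pos (by norm_num) k
      linarith
    · have hk1 : ¬ (k ≤ 1) := by omega
      simp only [A, hk1, if_false]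
      rw [hkk]
      nlinarith
  · show (8:ℝ) ^ k < A (k + 1)
    rw [A_succ hk]
    nlinarith [pow_pos (by norm_num : (0:ℝ) < 8) k]

lemma U_disjoint {k l : ℕ} (hk : 1 ≤ k) (hl : 1 ≤ l) (hkl : k ≠ l) :
    Disjoint (U k) (U l) := by
  rw [Set.disjoint_left]
  rintro p ⟨hk1, hk2⟩ ⟨hl1, hl2⟩
  rcases Nat.lt_or_ge k l with h | h
  · have : A (k + 1) ≤ A l := A_le (by omega) (by omega)
    linarith
  · have hlk : l < k := by omega
    have : A (l + 1) ≤ A k := A_le (by omega) (by omega)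
    linarith

/-- Every visible point lies in one of the strips. -/
lemma cover {n m : ℕ} (hn : n = 2 * m + 2) (hm : 1 ≤ m) {q : ℝ × ℝ}
    (hq : q ∈ surf15 (fun i : Fin n => PP i.val))
    (hvis : Visible15 (fun i : Fin n => PP i.val) (0, 0) q) :
    ∃ k, 1 ≤ k ∧ k ≤ m ∧ q ∈ U k := by
  have h0 : 0 ≤ q.1 := surf_fst_nonneg hq
  have hup : q.1 ≤ A (m + 1) := by
    have h1 : q.1 ≤ (PP (n - 1)).1 := surf_fst_le hq
    have h2 : n - 1 = 2 * m + 1 := by omega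
    rw [h2, PP_odd] at h1
    rw [A_succ hm]
    exact h1
  have main : ∀ d j, 1 ≤ j → j ≤ m → m - j ≤ d → A j < q.1 →
      ∃ k, 1 ≤ k ∧ k ≤ m ∧ q ∈ U k := by
    intro d
    induction d with
    | zero =>
      intro j hj1 hjm hd hA
      have hjm' : j = m := by omega
      subst hjm'
      by_cases hlt : q.1 < A (j + 1)
      · exact ⟨j, hj1, le_refl _, hA, hlt⟩
      · exfalso
        have heq : q.1 = A (j + 1) := le_antisymm hup (not_lt.1 hlt)
        refine valley_invisible hj1 (by omega) hq ?_ hvis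
        rw [heq, A_succ hj1]
    | succ d ih =>
      intro j hj1 hjm hd hA
      by_cases hlt : q.1 < A (j + 1)
      · exact ⟨j, hj1, hjm, hA, hlt⟩
      · rcases eq_or_lt_of_le (not_lt.1 hlt) with heq | hlt2
        · exfalso
          refine valley_invisible hj1 (by omega) hq ?_ hvis
          rw [← heq, A_succ hj1]
        · have hjm2 : j + 1 ≤ m := by
            by_contra hcon
            have hjm' : j = m := by omega
            subst hjm'
            linarith
          exact ih (j + 1) (by omega) hjm2 (by omega) hlt2
  apply main m 1 (le_refl _) hm (by omega)
  have : A 1 = -1 := by simp [A]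
  linarith

end Prick15Aux


/-- For every even `n ≥ 8` there is a 1.5D terrain with `n` vertices whose
prickliness is at most `2`, and a viewpoint `v` on its surface whose viewshed has at least
`n/2 - 1` connected components (witnessed by `n/2 - 1` visible points lying in pairwise
distinct connected components of the viewshed). -/
theorem exists_low_prickliness_high_viewshed_15D :
    ∀ n : ℕ, 8 ≤ n → Even n →
      ∃ P : Fin n → ℝ × ℝ,
        (∀ i j : Fin n, i < j → (P i).1 < (P j).1) ∧
        prick15 P ≤ 2 ∧
        ∃ v ∈ surf15 P,
          ∃ f : Fin (n / 2 - 1) → ℝ × ℝ,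
            (∀ i, f i ∈ visSet15 P v) ∧
            ∀ i j, i ≠ j →
              connectedComponentIn (visSet15 P v) (f i)
                ≠ connectedComponentIn (visSet15 P v) (f j) := by
  intro n hn8 heven
  obtain ⟨m, hm⟩ : ∃ m, n = 2 * m + 2 := by
    obtain ⟨t, ht⟩ := heven
    exact ⟨t - 1, by omega⟩
  subst hm
  have hm3 : 3 ≤ m := by omega
  set Pf : Fin (2 * m + 2) → ℝ × ℝ := fun i => Prick15Aux.PP i.val with hPf
  refine ⟨Pf, ?_, ?_, (0, 0), ?_, fun i => Prick15Aux.PP (2 * (i.val + 1)), ?_, ?_⟩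
  · intro i j hij
    exact Prick15Aux.PP_fst_strictMono hij
  · -- prickliness at most 2
    unfold prick15
    apply csSup_le
    · refine ⟨count15 Pf ((0 : ℝ), (1 : ℝ)), ((0 : ℝ), (1 : ℝ)), ?_, rfl⟩
      intro h
      exact one_ne_zero (congrArg Prod.snd h)
    · rintro x ⟨w, hw, rfl⟩
      exact Prick15Aux.count_le rfl hw
  · -- the viewpoint is on the surface
    have h := Prick15Aux.vertex_mem_surf (n := 2 * m + 2) (j := 0) (by omega)
    rwa [Prick15Aux.PP_zero] at h
  · -- every chosen peak is visible
    intro i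
    have him : i.val + 1 ≤ m := by have := i.isLt; omega
    exact ⟨Prick15Aux.vertex_mem_surf (by omega),
      Prick15Aux.tip_visible (by omega) (by omega)⟩
  · -- the peaks lie in pairwise distinct connected components
    intro i j hij hcomp
    set VS := visSet15 Pf (0, 0) with hVS
    have tipVS : ∀ k : ℕ, 1 ≤ k → k ≤ m → Prick15Aux.PP (2 * k) ∈ VS := by
      intro k h1 h2
      exact ⟨Prick15Aux.vertex_mem_surf (by omega), Prick15Aux.tip_visible h1 (by omega)⟩
    have comp_sub : ∀ k : ℕ, 1 ≤ k → k ≤ m →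
        connectedComponentIn VS (Prick15Aux.PP (2 * k)) ⊆ Prick15Aux.U k := by
      intro k h1 h2
      have hopenU : IsOpen (Prick15Aux.U k) := Prick15Aux.U_open k
      have hopenV : IsOpen (⋃ l ∈ (Finset.Icc 1 m).erase k, Prick15Aux.U l) :=
        isOpen_biUnion fun l _ => Prick15Aux.U_open l
      have hdisj : Disjoint (Prick15Aux.U k)
          (⋃ l ∈ (Finset.Icc 1 m).erase k, Prick15Aux.U l) := by
        simp only [Set.disjoint_iUnion_right]
        intro l hl
        have hlk : l ≠ k := (Finset.mem_erase.1 hl).1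
        have hl1 : 1 ≤ l := (Finset.mem_Icc.1 (Finset.mem_erase.1 hl).2).1
        exact Prick15Aux.U_disjoint h1 hl1 (Ne.symm hlk)
      refine IsPreconnected.subset_left_of_subset_union hopenU hopenV hdisj ?_ ?_
        isPreconnected_connectedComponentIn
      · intro x hx
        have hxVS : x ∈ VS := connectedComponentIn_subset _ _ hx
        obtain ⟨l, hl1, hl2, hl3⟩ := Prick15Aux.cover rfl (by omega) hxVS.1 hxVS.2
        by_cases hlk : l = k
        · exact Or.inl (hlk ▸ hl3)
        · refine Or.inr (Set.mem_iUnion₂.2 ⟨l, ?_, hl3⟩)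
          exact Finset.mem_erase.2 ⟨hlk, Finset.mem_Icc.2 ⟨hl1, hl2⟩⟩
      · exact ⟨Prick15Aux.PP (2 * k), mem_connectedComponentIn (tipVS k h1 h2),
          Prick15Aux.tip_mem_U h1⟩
    have hi : i.val + 1 ≤ m := by have := i.isLt; omega
    have hj : j.val + 1 ≤ m := by have := j.isLt; omega
    have h1 : Prick15Aux.PP (2 * (j.val + 1)) ∈ Prick15Aux.U (i.val + 1) := by
      have hmem : Prick15Aux.PP (2 * (j.val + 1)) ∈
          connectedComponentIn VS (Prick15Aux.PP (2 * (i.val + 1))) := by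
        rw [hcomp]
        exact mem_connectedComponentIn (tipVS _ (by omega) hj)
      exact comp_sub _ (by omega) hi hmem
    have h2 : Prick15Aux.PP (2 * (j.val + 1)) ∈ Prick15Aux.U (j.val + 1) :=
      Prick15Aux.tip_mem_U (by omega)
    have hne : i.val + 1 ≠ j.val + 1 := by
      intro h
      exact hij (Fin.ext (by omega))
    exact Set.disjoint_left.1
      (Prick15Aux.U_disjoint (by omega) (by omega) hne) h1 h2

end
end

section
/- Let h : ℝ² → ℝ be continuous-on-its-domain terrain function with graph S, let p ∈ ℝ³ satisfy p_z ≥ h(p_x, p_y), and let q ∈ S with q ≠ p. Suppose there is an open neighborhood B of (q_x, q_y) in the domain of h on which h coincides with an affine function g, and suppose p lies strictly above the plane of that face, i.e. p_z > g(p_x, p_y). Then no point of the form q + t(q − p) with t > 0 is visible from p. -/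
noncomputable section

/-- Points of `ℝ³`. -/
abbrev Pt3 : Type := Fin 3 → ℝ
/-- Points of `ℝ²`. -/
abbrev Pt2 : Type := Fin 2 → ℝ

/-- Projection onto the first two (xy-) coordinates. -/
def proj2 (v : Pt3) : Pt2 := ![v 0, v 1]

/-- `q` is visible from `p` over the terrain given by `h : D → ℝ`: no point of the
segment `[p,q]` lies strictly below the terrain. -/
def VisibleOver (D : Set Pt2) (h : Pt2 → ℝ) (p q : Pt3) : Prop :=
  ∀ r ∈ segment ℝ p q, proj2 r ∈ D → h (proj2 r) ≤ r 2

/-- Let `h` be a terrain function, continuous on its domain `D`, with graph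
`S`; let `p` be a point with `p_z ≥ h(p_x, p_y)`, and let `q ∈ S`, `q ≠ p`. If `h` coincides
with an affine map `g` on an open neighborhood `B ⊆ D` of `(q_x, q_y)` and `p` lies strictly
above the plane of that face (`p_z > g(p_x, p_y)`), then no point `q + t (q - p)` with `t > 0`
is visible from `p`. -/
theorem not_visible_beyond_face_hit
    (D : Set Pt2) (h : Pt2 → ℝ) (hcont : ContinuousOn h D)
    (S : Set Pt3) (hS : S = {q : Pt3 | proj2 q ∈ D ∧ q 2 = h (proj2 q)})
    (p : Pt3) (hpD : proj2 p ∈ D) (hp : h (proj2 p) ≤ p 2)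
    (q : Pt3) (hq : q ∈ S) (hqp : q ≠ p)
    (B : Set Pt2) (hBopen : IsOpen B) (hBD : B ⊆ D) (hqB : proj2 q ∈ B)
    (g : Pt2 →ᵃ[ℝ] ℝ) (hg : ∀ x ∈ B, h x = g x)
    (hpg : g (proj2 p) < p 2) :
    ∀ t : ℝ, 0 < t → ¬ VisibleOver D h p (q + t • (q - p)) := by
  intro t ht hvis
  set v : Pt3 := q - p with hv
  rw [hS] at hq
  obtain ⟨hqD, hqz⟩ := hq
  -- projection commutes with the line parametrization
  have hproj : ∀ s : ℝ, proj2 (q + s • v) = proj2 q + s • proj2 v := by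
    intro s; funext i; fin_cases i <;>
      simp [proj2, Pi.add_apply, Pi.smul_apply]
  have hprojp : proj2 p = proj2 q + (-1 : ℝ) • proj2 v := by
    funext i; fin_cases i <;>
      simp [proj2, hv, Pi.sub_apply, Pi.smul_apply] <;> ring
  set c : ℝ := g.linear (proj2 v) with hc
  have hgline : ∀ s : ℝ, g (proj2 q + s • proj2 v) = g (proj2 q) + s * c := by
    intro s
    have h1 : proj2 q + s • proj2 v = (s • proj2 v) +ᵥ proj2 q := by
      simp [vadd_eq_add, add_comm]
    rw [h1, g.map_vadd]
    simp [vadd_eq_add, add_comm, mul_comm, hc]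
  have hgq : g (proj2 q) = q 2 := by rw [← hg _ hqB, hqz]
  have hp2 : p 2 = q 2 - v 2 := by simp [hv, Pi.sub_apply]
  -- slope comparison: v 2 < c
  have hslope : v 2 < c := by
    have h2 : g (proj2 p) = q 2 - c := by
      rw [hprojp, hgline, hgq]; ring
    rw [h2, hp2] at hpg
    linarith
  -- choose small s > 0 with proj2 (q + s • v) ∈ B
  have hcontφ : Continuous fun s : ℝ => proj2 q + s • proj2 v :=
    continuous_const.add (continuous_id.smul continuous_const)
  have hopen : IsOpen ((fun s : ℝ => proj2 q + s • proj2 v) ⁻¹' B) :=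
    hBopen.preimage hcontφ
  have h0mem : (0 : ℝ) ∈ (fun s : ℝ => proj2 q + s • proj2 v) ⁻¹' B := by
    simp [hqB]
  obtain ⟨ε, hε, hball⟩ := Metric.isOpen_iff.mp hopen 0 h0mem
  set s : ℝ := min (ε / 2) t with hs
  have hs0 : 0 < s := lt_min (by linarith) ht
  have hst : s ≤ t := min_le_right _ _
  have hsε : s < ε := lt_of_le_of_lt (min_le_left _ _) (by linarith)
  have hmemB : proj2 (q + s • v) ∈ B := by
    rw [hproj]
    apply hball
    simp [Metric.mem_ball, Real.dist_eq, abs_of_pos hs0, hsε]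
  set r : Pt3 := q + s • v with hr
  have hrseg : r ∈ segment ℝ p (q + t • v) := by
    rw [segment_eq_image']
    refine ⟨(1 + s) / (1 + t), ⟨?_, ?_⟩, ?_⟩
    · positivity
    · rw [div_le_one (by linarith)]; linarith
    · have h1t : (1 : ℝ) + t ≠ 0 := by positivity
      funext i
      simp only [hr, hv, Pi.add_apply, Pi.sub_apply, Pi.smul_apply, smul_eq_mul]
      field_simp
      ring
  have hbelow : r 2 < h (proj2 r) := by
    have hz : r 2 = q 2 + s * v 2 := by simp [hr, Pi.add_apply, Pi.smul_apply]
    have hw : h (proj2 r) = q 2 + s * c := by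
      rw [hg _ hmemB, hr, hproj, hgline, hgq]
    rw [hz, hw]
    have := mul_lt_mul_of_pos_left hslope hs0
    linarith
  have := hvis r hrseg (hBD hmemB)
  linarith

end
end

section
/- Let M be a positive integer, let x_1, …, x_n ∈ {1, …, M} be integers, set ε = 18/(M+1) and x'_i = 180·x_i/(M+1). Then the closed intervals [x'_i − ε, x'_i + ε], i = 1, …, n, are pairwise disjoint if and only if the integers x_1, …, x_n are pairwise distinct. -/
/-- Rescaling integers `x i ∈ {1, …, M}` to `x'_i = 180 x_i / (M+1)` and
taking `ε = 18 / (M+1)`, the closed intervals `[x'_i - ε, x'_i + ε]` are pairwise disjoint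
if and only if the integers `x i` are pairwise distinct. -/
theorem rescaled_intervals_disjoint_iff_injective
    (M : ℕ) (hM : 0 < M) (n : ℕ) (x : Fin n → ℤ)
    (hx : ∀ i, 1 ≤ x i ∧ x i ≤ (M : ℤ)) :
    (∀ i j : Fin n, i ≠ j →
        Set.Icc (180 * (x i : ℝ) / (M + 1) - 18 / (M + 1))
                (180 * (x i : ℝ) / (M + 1) + 18 / (M + 1)) ∩
          Set.Icc (180 * (x j : ℝ) / (M + 1) - 18 / (M + 1))
                  (180 * (x j : ℝ) / (M + 1) + 18 / (M + 1)) = ∅)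
      ↔ Function.Injective x := by
  have hMpos : (0 : ℝ) < (M : ℝ) + 1 := by positivity
  constructor
  · intro h i j hij
    by_contra hne
    have := h i j hne
    have hmem : 180 * (x i : ℝ) / (M + 1) ∈
        Set.Icc (180 * (x i : ℝ) / (M + 1) - 18 / (M + 1))
                (180 * (x i : ℝ) / (M + 1) + 18 / (M + 1)) ∩
          Set.Icc (180 * (x j : ℝ) / (M + 1) - 18 / (M + 1))
                  (180 * (x j : ℝ) / (M + 1) + 18 / (M + 1)) := by
      rw [hij]
      constructor <;> constructor <;>
        [skip; skip; skip; skip] <;>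
        · have h18 : (0:ℝ) < 18 / (M + 1) := by positivity
          linarith
    rw [this] at hmem
    exact hmem
  · intro hinj i j hij
    ext y
    simp only [Set.mem_inter_iff, Set.mem_Icc, Set.mem_empty_iff_false, iff_false, not_and,
      and_imp]
    intro h1 h2 h3
    intro h4
    have hne : x i ≠ x j := fun h => hij (hinj h)
    have habs : (1 : ℝ) ≤ |(x i : ℝ) - (x j : ℝ)| := by
      have h' : (1 : ℤ) ≤ |x i - x j| := Int.one_le_abs (sub_ne_zero.mpr hne)
      exact_mod_cast h'
    have c1 : 180 * (x i : ℝ) - 18 ≤ y * (M + 1) := by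
      rw [← sub_div] at h1; exact (div_le_iff₀ hMpos).mp h1
    have c2 : y * (M + 1) ≤ 180 * (x i : ℝ) + 18 := by
      rw [← add_div] at h2; exact (le_div_iff₀ hMpos).mp h2
    have c3 : 180 * (x j : ℝ) - 18 ≤ y * (M + 1) := by
      rw [← sub_div] at h3; exact (div_le_iff₀ hMpos).mp h3
    have c4 : y * (M + 1) ≤ 180 * (x j : ℝ) + 18 := by
      rw [← add_div] at h4; exact (le_div_iff₀ hMpos).mp h4
    rcases abs_cases ((x i : ℝ) - (x j : ℝ)) with ⟨heq, _⟩ | ⟨heq, _⟩ <;>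
      rw [heq] at habs <;> linarith
end

section
/- Let n ≥ 1, let a ≤ b be real numbers, let J_1, …, J_{n−1} be subsets of ℝ each containing the interval [a, b], and let I_1, …, I_n be nonempty subsets of [a, b]. Then the maximum, over x ∈ ℝ, of the number of sets among J_1, …, J_{n−1}, I_1, …, I_n that contain x equals n if and only if the sets I_1, …, I_n are pairwise disjoint. -/
lemma ncard_sum_split {α β : Type*} [Fintype α] [Fintype β] (p : α ⊕ β → Prop) :
    {s | p s}.ncard = {a | p (Sum.inl a)}.ncard + {b | p (Sum.inr b)}.ncard := by
  have h : {s | p s} = Sum.inl '' {a | p (Sum.inl a)} ∪ Sum.inr '' {b | p (Sum.inr b)} := by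
    ext s; cases s <;> simp
  rw [h, Set.ncard_union_eq ?_ (Set.toFinite _) (Set.toFinite _),
    Set.ncard_image_of_injective _ Sum.inl_injective,
    Set.ncard_image_of_injective _ Sum.inr_injective]
  rw [Set.disjoint_left]
  rintro x ⟨a, -, rfl⟩ ⟨b, -, h⟩
  exact Sum.inr_ne_inl h

/-- Let `J 0, …, J (n-2)` be sets each containing `[a, b]` and let
`I 0, …, I (n-1)` be nonempty subsets of `[a, b]` (with `n ≥ 1`). The maximum over `x ∈ ℝ` of
the number of sets of the combined family containing `x` equals `n` if and only if the sets
`I 0, …, I (n-1)` are pairwise disjoint. -/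
theorem max_coverage_eq_iff_pairwise_disjoint
    (n : ℕ) (hn : 1 ≤ n) (a b : ℝ) (hab : a ≤ b)
    (J : Fin (n - 1) → Set ℝ) (hJ : ∀ j, Set.Icc a b ⊆ J j)
    (I : Fin n → Set ℝ) (hInonempty : ∀ i, (I i).Nonempty)
    (hIsub : ∀ i, I i ⊆ Set.Icc a b) :
    sSup {k : ℕ | ∃ x : ℝ,
        k = {s : Fin (n - 1) ⊕ Fin n | x ∈ Sum.elim J I s}.ncard} = n
      ↔ ∀ i j : Fin n, i ≠ j → I i ∩ I j = ∅ := by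
  classical
  set f : ℝ → ℕ := fun x => {s : Fin (n - 1) ⊕ Fin n | x ∈ Sum.elim J I s}.ncard with hf
  set S : Set ℕ := {k : ℕ | ∃ x : ℝ, k = f x} with hS
  have hsplit : ∀ x, f x = {j | x ∈ J j}.ncard + {i | x ∈ I i}.ncard := by
    intro x
    simpa using ncard_sum_split (fun s : Fin (n - 1) ⊕ Fin n => x ∈ Sum.elim J I s)
  have hJle : ∀ x : ℝ, ({j : Fin (n - 1) | x ∈ J j}).ncard ≤ n - 1 := by
    intro x
    calc ({j : Fin (n - 1) | x ∈ J j}).ncard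
        ≤ (Set.univ : Set (Fin (n - 1))).ncard :=
          Set.ncard_le_ncard (Set.subset_univ _) Set.finite_univ
      _ = n - 1 := by simp [Set.ncard_univ]
  have hIle : ∀ x : ℝ, ({i : Fin n | x ∈ I i}).ncard ≤ n := by
    intro x
    calc ({i : Fin n | x ∈ I i}).ncard
        ≤ (Set.univ : Set (Fin n)).ncard :=
          Set.ncard_le_ncard (Set.subset_univ _) Set.finite_univ
      _ = n := by simp [Set.ncard_univ]
  have hJfull : ∀ x ∈ Set.Icc a b, ({j : Fin (n - 1) | x ∈ J j}).ncard = n - 1 := by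
    intro x hx
    have : {j : Fin (n - 1) | x ∈ J j} = Set.univ := by
      ext j; simp [hJ j hx]
    simp [this, Set.ncard_univ]
  have hbdd : BddAbove S := by
    refine ⟨2 * n, ?_⟩
    rintro k ⟨x, rfl⟩
    have := hsplit x
    have h1 := hJle x
    have h2 := hIle x
    omega
  have hSne : S.Nonempty := ⟨f a, a, rfl⟩
  constructor
  · intro hsup i j hij
    by_contra h
    rw [← Ne, ← Set.nonempty_iff_ne_empty] at h
    obtain ⟨x, hxi, hxj⟩ := h
    have hxab : x ∈ Set.Icc a b := hIsub i hxi
    have hpair : ({i, j} : Set (Fin n)) ⊆ {i' : Fin n | x ∈ I i'} := by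
      rintro k hk
      rcases hk with rfl | rfl
      · exact hxi
      · exact hxj
    have h2 : 2 ≤ ({i' : Fin n | x ∈ I i'}).ncard := by
      have := Set.ncard_le_ncard hpair (Set.toFinite _)
      rwa [Set.ncard_pair hij] at this
    have hfx : n + 1 ≤ f x := by
      have := hsplit x
      have := hJfull x hxab
      omega
    have hmem : f x ∈ S := ⟨x, rfl⟩
    have := le_csSup hbdd hmem
    omega
  · intro hdisj
    have hsub : ∀ x : ℝ, ({i : Fin n | x ∈ I i}).Subsingleton := by
      intro x i hi j hj
      by_contra hij
      have := hdisj i j hij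
      have : x ∈ I i ∩ I j := ⟨hi, hj⟩
      rw [hdisj i j hij] at this
      exact this
    have hIone : ∀ x : ℝ, ({i : Fin n | x ∈ I i}).ncard ≤ 1 := by
      intro x
      exact (Set.ncard_le_one (Set.toFinite _)).mpr (fun _ ha _ hb => hsub x ha hb)
    apply le_antisymm
    · refine csSup_le hSne ?_
      rintro k ⟨x, rfl⟩
      have := hsplit x
      have := hJle x
      have := hIone x
      omega
    · have hmem : n ∈ S := by
        obtain ⟨x, hx⟩ := hInonempty ⟨0, hn⟩
        refine ⟨x, ?_⟩
        have hxab : x ∈ Set.Icc a b := hIsub _ hx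
        have h1 : ({i : Fin n | x ∈ I i}).ncard = 1 := by
          have hne : ({i : Fin n | x ∈ I i}).Nonempty := ⟨_, hx⟩
          have hpos : 0 < ({i : Fin n | x ∈ I i}).ncard :=
            (Set.ncard_pos (Set.toFinite _)).mpr hne
          have := hIone x
          omega
        have := hsplit x
        have := hJfull x hxab
        omega
      exact le_csSup hbdd hmem
end

section
/- Let X be a set, let Q, R_1, …, R_M ⊆ X and let m, k be natural numbers. Assume: (i) every x ∈ X belongs to at most m + 1 of the sets Q, R_1, …, R_M; (ii) every x belonging to exactly m + 1 of these sets belongs to Q; and let B_1, …, B_k ⊆ X each contain Q. Then every x ∈ X belongs to at most m + k + 1 of the sets Q, R_1, …, R_M, B_1, …, B_k, and there exists a point belonging to exactly m + k + 1 of them if and only if there exists a point q ∈ Q belonging to at least m of the sets R_1, …, R_M. -/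
/-- Set-theoretic core of the 3SUM-hardness correctness lemma.
The family `Q, R 0, …, R (M-1)` is indexed by `Option (Fin M)` (with `none ↦ Q`), and the
augmented family additionally contains `B 0, …, B (k-1)`, indexed by `Option (Fin M) ⊕ Fin k`.
If every point is covered at most `m + 1` times by the first family, every point covered
exactly `m + 1` times lies in `Q`, and every `B j` contains `Q`, then every point is covered at
most `m + k + 1` times by the augmented family, and some point is covered exactly `m + k + 1`
times iff some point of `Q` lies in at least `m` of the sets `R i`. -/
theorem augmented_coverage_le_and_exists_iff
    (X : Type*) (M m k : ℕ) (Q : Set X) (R : Fin M → Set X) (B : Fin k → Set X)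
    (hcov : ∀ x : X, {o : Option (Fin M) | x ∈ o.elim Q R}.ncard ≤ m + 1)
    (hmax : ∀ x : X, {o : Option (Fin M) | x ∈ o.elim Q R}.ncard = m + 1 → x ∈ Q)
    (hB : ∀ j, Q ⊆ B j) :
    (∀ x : X,
        {s : Option (Fin M) ⊕ Fin k | x ∈ Sum.elim (fun o => o.elim Q R) B s}.ncard
          ≤ m + k + 1) ∧
    ((∃ x : X,
        {s : Option (Fin M) ⊕ Fin k | x ∈ Sum.elim (fun o => o.elim Q R) B s}.ncard
          = m + k + 1)
      ↔ ∃ q ∈ Q, m ≤ {i : Fin M | q ∈ R i}.ncard) := by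
  classical
  set A : X → Set (Option (Fin M)) := fun x => {o | x ∈ o.elim Q R} with hAdef
  set C : X → Set (Fin k) := fun x => {j | x ∈ B j} with hCdef
  have hAn : ∀ x, (A x).ncard = {i : Fin M | x ∈ R i}.ncard + (if x ∈ Q then 1 else 0) := by
    intro x
    have himg : (A x) = (if x ∈ Q then insert none (Option.some '' {i | x ∈ R i})
        else Option.some '' {i | x ∈ R i}) := by
      split_ifs with hq
      · ext o; cases o <;> simp [hAdef, hq]
      · ext o; cases o <;> simp [hAdef, hq]
    rw [himg]
    split_ifs with hq
    · rw [Set.ncard_insert_of_notMem (by simp),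
        Set.ncard_image_of_injective _ (Option.some_injective _)]
    · rw [Set.ncard_image_of_injective _ (Option.some_injective _)]
      omega
  have hSn : ∀ x : X,
      {s : Option (Fin M) ⊕ Fin k | x ∈ Sum.elim (fun o => o.elim Q R) B s}.ncard
        = (A x).ncard + (C x).ncard := by
    intro x
    have hS : {s : Option (Fin M) ⊕ Fin k | x ∈ Sum.elim (fun o => o.elim Q R) B s}
        = Sum.inl '' A x ∪ Sum.inr '' C x := by
      ext s; cases s <;> simp [hAdef, hCdef]
    rw [hS, Set.ncard_union_eq (by simp [Set.disjoint_left]) (Set.toFinite _) (Set.toFinite _),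
      Set.ncard_image_of_injective _ Sum.inl_injective,
      Set.ncard_image_of_injective _ Sum.inr_injective]
  have hCle : ∀ x, (C x).ncard ≤ k := by
    intro x
    have := Set.ncard_le_ncard (Set.subset_univ (C x)) (Set.toFinite _)
    simpa [Set.ncard_univ] using this
  constructor
  · intro x
    have h1 : (A x).ncard ≤ m + 1 := hcov x
    have h2 := hCle x
    rw [hSn x]
    omega
  · constructor
    · rintro ⟨x, hx⟩
      rw [hSn x] at hx
      have h1 : (A x).ncard ≤ m + 1 := hcov x
      have h2 := hCle x
      have hAx : (A x).ncard = m + 1 := by omega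
      have hq : x ∈ Q := hmax x hAx
      refine ⟨x, hq, ?_⟩
      rw [hAn x, if_pos hq] at hAx
      omega
    · rintro ⟨q, hq, hm⟩
      refine ⟨q, ?_⟩
      rw [hSn q]
      have h1 : (A q).ncard ≤ m + 1 := hcov q
      rw [hAn q, if_pos hq] at h1 ⊢
      have hCq : (C q) = Set.univ := by
        ext j; simp [hCdef, hB j hq]
      rw [hCq]
      simp [Set.ncard_univ]
      omega
end
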